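/- Let G = (V, E, w) be a weighted digraph, let π = (v₀, v₁, …, v_q) be a shortest path in G, and let x ∈ V be a vertex from which at least one vertex of π is reachable. Let ρ = min_{0≤i≤q} d_G(x, v_i), for R ≥ 0 let S(R) = {i ∈ {0, …, q} : d_G(x, v_i) ≤ R}, let η = min{R ≥ ρ : S(R) is upward closed in {0, …, q}}, and let m = min S(η). Let I = {i ∈ {m, …, q} : d_G(x, v_i) < d_G(x, v_j) for all j with m ≤ j < i} (so m ∈ I), enumerate I in decreasing order as i₁ > i₂ > … > i_l (thus i_l = m), and write y_r = v_{i_r} for 1 ≤ r ≤ l and y₀ = v_q. Then: (i) for every r with 2 ≤ r ≤ l, d_G(x, y_r) ≤ max_{1 ≤ r' ≤ r−1} ( d_G(x, y_{r'}) + d_G(y_{r'}, y_{r'−1}) ); and (ii) η ≤ max_{1 ≤ r ≤ l} ( d_G(x, y_r) + d_G(y_r, y_{r−1}) ). -/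

import Mathlib

/-!
Write `f i = d(x, v_i)` and `M_k = max_{1 ≤ r ≤ k} (d(x, y_r) + d(y_r, y_{r-1}))`.
Every `j ∈ [i_k, q]` lies in some segment `[i_s, i_{s-1}]` of the shortest path with
`s ≤ k` (where `i_0 = q`), so `f j ≤ f(i_s) + d(y_s, v_j) ≤ f(i_s) + d(y_s, y_{s-1}) ≤ M_k`.
Since indices below `m` have `f > η`, to get `η ≤ M` it suffices that `ρ ≤ M` and that `S(M)`
is upward closed within `[m, q]`. For `M = M_l` this is the bound above, as `i_l = m`, and
this gives (ii). For (i), if `f(i_r) > M_{r-1}` then, as `i_r` is a strict prefix minimum of `f`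
on `[m, i_{r-1})`, every `i ∈ [m, q]` with `f i ≤ M_{r-1}` is `≥ i_{r-1}`; hence
`f(i_r) ≤ η ≤ M_{r-1}`, a contradiction.
-/
open scoped ENNReal BigOperators

/-- A weighted digraph: edges `E` with no self-loops and positive real weights. -/
structure WDigraph (V : Type) where
  E : V → V → Prop
  no_self : ∀ v : V, ¬ E v v
  w : V → V → ℝ
  w_pos : ∀ u v : V, E u v → 0 < w u v

namespace WDigraph

variable {V : Type}

/-- `PathW G u v c`: there is a directed path from `u` to `v` in `G` of total weight `c`. -/
inductive PathW (G : WDigraph V) : V → V → ℝ → Prop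
  | nil (u : V) : PathW G u u 0
  | cons {u x v : V} {c : ℝ} : G.E u x → PathW G x v c → PathW G u v (G.w u x + c)

/-- `u ⇝_G v`: there is a directed path from `u` to `v`. -/
def Reach (G : WDigraph V) (u v : V) : Prop := Relation.ReflTransGen G.E u v

/-- The shortest-path quasimetric: infimum of path weights, `∞` if no path exists. -/
noncomputable def dist (G : WDigraph V) (u v : V) : ℝ≥0∞ :=
  ⨅ (c : ℝ) (_ : G.PathW u v c), ENNReal.ofReal c

/-- A DAG: no vertex has a nonempty directed path to itself. -/
def IsDAG (G : WDigraph V) : Prop := ∀ v : V, ¬ Relation.TransGen G.E v v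

/-- Number of edges of the digraph. -/
noncomputable def edgeCount (G : WDigraph V) : ℕ := Nat.card {p : V × V // G.E p.1 p.2}

end WDigraph

theorem Nat.exists_apply_succ_le_le_apply {α : Type*} [LinearOrder α] (e : ℕ → α) {k : ℕ}
    {a : α} (hk : 0 < k) (hka : e k ≤ a) (ha0 : a ≤ e 0) :
    ∃ s < k, e (s + 1) ≤ a ∧ a ≤ e s := by
  induction k with
  | zero => omega
  | succ k ih =>
    rcases le_or_gt a (e k) with hak | hka'
    · exact ⟨k, k.lt_succ_self, hka, hak⟩
    · obtain ⟨s, hsk, hs⟩ := ih (Nat.pos_of_ne_zero (by rintro rfl; exact ha0.not_gt hka'))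
        hka'.le
      exact ⟨s, hsk.trans k.lt_succ_self, hs⟩

namespace WDigraph

variable {V : Type} {G : WDigraph V}

theorem PathW.append {u v w : V} {c c' : ℝ} (h : G.PathW u v c) (h' : G.PathW v w c') :
    G.PathW u w (c + c') := by
  induction h with
  | nil => simpa using h'
  | cons e _ ih => rw [add_assoc]; exact .cons e (ih h')

theorem dist_le_of_pathW {u v : V} {c : ℝ} (h : G.PathW u v c) :
    G.dist u v ≤ ENNReal.ofReal c :=
  iInf₂_le c h

theorem dist_triangle (u v w : V) : G.dist u w ≤ G.dist u v + G.dist v w := by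
  simp only [dist, ENNReal.iInf_add, ENNReal.add_iInf]
  exact le_iInf₂ fun c hc => le_iInf₂ fun c' hc' =>
    (dist_le_of_pathW (hc'.append hc)).trans ENNReal.ofReal_add_le

def IsShortestPath (G : WDigraph V) (q : ℕ) (z : ℕ → V) : Prop :=
  (∀ i, i < q → G.E (z i) (z (i + 1))) ∧
    ∀ a b : ℕ, a ≤ b → b ≤ q →
      G.dist (z a) (z b) = ENNReal.ofReal (∑ i ∈ Finset.Ico a b, G.w (z i) (z (i + 1)))

noncomputable def hopBound (G : WDigraph V) (x : V) (y : ℕ → V) (k : ℕ) : ℝ≥0∞ :=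
  ⨆ r ∈ Finset.Icc 1 k, (G.dist x (y r) + G.dist (y r) (y (r - 1)))

theorem le_hopBound {x : V} {y : ℕ → V} {k r : ℕ} (hr : 1 ≤ r) (hrk : r ≤ k) :
    G.dist x (y r) + G.dist (y r) (y (r - 1)) ≤ G.hopBound x y k :=
  le_iSup₂ (f := fun r (_ : r ∈ Finset.Icc 1 k) => G.dist x (y r) + G.dist (y r) (y (r - 1)))
    r (Finset.mem_Icc.2 ⟨hr, hrk⟩)

namespace IsShortestPath

variable {q : ℕ} {z : ℕ → V}

theorem dist_mono (hπ : G.IsShortestPath q z) {a b b' : ℕ} (hab : a ≤ b) (hbb' : b ≤ b')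
    (hb'q : b' ≤ q) : G.dist (z a) (z b) ≤ G.dist (z a) (z b') := by
  rw [hπ.2 a b hab (hbb'.trans hb'q), hπ.2 a b' (hab.trans hbb') hb'q]
  refine ENNReal.ofReal_le_ofReal (Finset.sum_le_sum_of_subset_of_nonneg
    (Finset.Ico_subset_Ico le_rfl hbb') fun i hi _ => (G.w_pos _ _ (hπ.1 i ?_)).le)
  exact (Finset.mem_Ico.1 hi).2.trans_le hb'q

theorem dist_le_add_dist (hπ : G.IsShortestPath q z) (x : V) {a j b : ℕ} (haj : a ≤ j)
    (hjb : j ≤ b) (hbq : b ≤ q) : G.dist x (z j) ≤ G.dist x (z a) + G.dist (z a) (z b) :=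
  (G.dist_triangle x (z a) (z j)).trans (add_le_add le_rfl (hπ.dist_mono haj hjb hbq))

theorem dist_le_hopBound (hπ : G.IsShortestPath q z) (x : V) {l : ℕ} {idx : ℕ → ℕ}
    {y : ℕ → V} (hy0 : y 0 = z q) (hy : ∀ r, 1 ≤ r → r ≤ l → y r = z (idx r))
    (hidx : ∀ r, 1 ≤ r → r ≤ l → idx r ≤ q) {k j : ℕ} (hk : 1 ≤ k) (hkl : k ≤ l)
    (hkj : idx k ≤ j) (hjq : j ≤ q) : G.dist x (z j) ≤ G.hopBound x y k := by
  set e := Function.update idx 0 q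
  have he : ∀ r ≤ l, y r = z (e r) ∧ e r ≤ q := by
    rintro (_ | r) hr
    · simp [e, hy0]
    · simp only [e, Function.update_of_ne r.succ_ne_zero]
      exact ⟨hy _ r.succ_pos hr, hidx _ r.succ_pos hr⟩
  obtain ⟨s, hsk, hs, hs'⟩ := Nat.exists_apply_succ_le_le_apply e hk
    (by simpa [e, Function.update_of_ne (Nat.pos_iff_ne_zero.1 hk)] using hkj) (by simpa [e])
  obtain ⟨hys, hesq⟩ := he s (by omega)
  calc G.dist x (z j) ≤ G.dist x (y (s + 1)) + G.dist (y (s + 1)) (y s) := by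
        rw [hys, (he (s + 1) (by omega)).1]; exact hπ.dist_le_add_dist x hs hs' hesq
    _ ≤ G.hopBound x y k := le_hopBound s.succ_pos hsk

end IsShortestPath

end WDigraph

section Threshold

variable {α : Type*} {f : ℕ → α} {q m : ℕ} {ρ η M : α}

def SublevelUpClosed [LE α] (f : ℕ → α) (q : ℕ) (R : α) : Prop :=
  ∀ i, i ≤ q → f i ≤ R → ∀ j, i ≤ j → j ≤ q → f j ≤ R

theorem sInf_sublevel_spec [CompleteLinearOrder α] (hρ : ρ = ⨅ i ∈ Finset.Iic q, f i) (hρη : ρ ≤ η)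
    (hm : m = sInf {i : ℕ | i ≤ q ∧ f i ≤ η}) : m ≤ q ∧ f m ≤ η := by
  obtain ⟨i, hi, hfi⟩ := (Finset.Iic q).exists_mem_eq_inf ⟨0, Finset.mem_Iic.2 q.zero_le⟩ f
  rw [Finset.inf_eq_iInf, ← hρ] at hfi
  exact hm ▸ Nat.sInf_mem (s := {i : ℕ | i ≤ q ∧ f i ≤ η}) ⟨i, Finset.mem_Iic.1 hi, hfi ▸ hρη⟩

theorem le_of_isLeast_sublevelUpClosed [LinearOrder α]
    (hη : IsLeast {R | ρ ≤ R ∧ SublevelUpClosed f q R} η)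
    (hm : m = sInf {i : ℕ | i ≤ q ∧ f i ≤ η}) (hρM : ρ ≤ M)
    (hM : ∀ i, m ≤ i → i ≤ q → f i ≤ M → ∀ j, i ≤ j → j ≤ q → f j ≤ M) : η ≤ M := by
  by_contra! hMη
  refine hMη.not_ge (hη.2 ⟨hρM, fun i hiq hfi => hM i ?_ hiq hfi⟩)
  exact hm ▸ Nat.sInf_le ⟨hiq, hfi.trans hMη.le⟩

end Threshold

section PrefixMinima

variable {α : Type*} {f : ℕ → α} {m q i j : ℕ}

def strictPrefixMinima [LT α] (f : ℕ → α) (m q : ℕ) : Set ℕ :=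
  {i | m ≤ i ∧ i ≤ q ∧ ∀ j, m ≤ j → j < i → f i < f j}

theorem self_mem_strictPrefixMinima [LT α] (hmq : m ≤ q) :
    m ∈ strictPrefixMinima f m q :=
  ⟨le_rfl, hmq, fun _ hmj hjm => absurd hmj hjm.not_ge⟩

theorem apply_le_of_mem_strictPrefixMinima [Preorder α] (hi : i ∈ strictPrefixMinima f m q)
    (hmj : m ≤ j) (hji : j ≤ i) : f i ≤ f j := by
  rcases hji.eq_or_lt with rfl | hji
  · exact le_rfl
  · exact (hi.2.2 j hmj hji).le

theorem exists_mem_strictPrefixMinima_apply_le [LinearOrder α] (hmj : m ≤ j) (hjq : j ≤ q) :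
    ∃ i ∈ strictPrefixMinima f m q, i ≤ j ∧ f i ≤ f j := by
  induction j using Nat.strong_induction_on with
  | _ j ih =>
    by_cases hj : j ∈ strictPrefixMinima f m q
    · exact ⟨j, hj, le_rfl, le_rfl⟩
    · obtain ⟨j', hmj', hj'j, hfj'⟩ : ∃ j', m ≤ j' ∧ j' < j ∧ f j' ≤ f j := by
        simpa [strictPrefixMinima, hmj, hjq] using hj
      obtain ⟨i, hi, hij', hfi⟩ := ih j' hj'j hmj' (hj'j.le.trans hjq)
      exact ⟨i, hi, hij'.trans hj'j.le, hfi.trans hfj'⟩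

variable [LinearOrder α] {l : ℕ} {idx : ℕ → ℕ}

theorem strictPrefixMinima_enum_last_eq (hanti : AntitoneOn idx (Set.Icc 1 l))
    (hmem : ∀ r, 1 ≤ r → r ≤ l → idx r ∈ strictPrefixMinima f m q)
    (hsurj : ∀ i ∈ strictPrefixMinima f m q, ∃ r, 1 ≤ r ∧ r ≤ l ∧ idx r = i) (hmq : m ≤ q) :
    idx l = m := by
  obtain ⟨t, ht1, htl, hidx⟩ := hsurj m (self_mem_strictPrefixMinima hmq)
  exact le_antisymm (hidx ▸ hanti ⟨ht1, htl⟩ ⟨ht1.trans htl, le_rfl⟩ htl)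
    (hmem l (ht1.trans htl) le_rfl).1

theorem strictPrefixMinima_enum_pred_le_of_lt (hanti : AntitoneOn idx (Set.Icc 1 l))
    (hmem : ∀ r, 1 ≤ r → r ≤ l → idx r ∈ strictPrefixMinima f m q)
    (hsurj : ∀ i ∈ strictPrefixMinima f m q, ∃ r, 1 ≤ r ∧ r ≤ l ∧ idx r = i) {r : ℕ}
    (hr : 1 < r) (hrl : r ≤ l) (hmi : m ≤ i) (hiq : i ≤ q) (hfi : f i < f (idx r)) :
    idx (r - 1) ≤ i := by
  obtain ⟨i', hi', hi'i, hfi'⟩ := exists_mem_strictPrefixMinima_apply_le (f := f) hmi hiq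
  obtain ⟨t, ht1, htl, rfl⟩ := hsurj i' hi'
  have htr : t < r := by
    by_contra! hrt
    have hidx : idx t ≤ idx r := hanti ⟨by omega, hrl⟩ ⟨ht1, htl⟩ hrt
    exact (apply_le_of_mem_strictPrefixMinima (hmem r (by omega) hrl) hi'.1 hidx).not_gt
      (hfi'.trans_lt hfi)
  exact (hanti ⟨ht1, htl⟩ ⟨by omega, by omega⟩ (by omega)).trans hi'i

end PrefixMinima

theorem eta_peak_bounds_general {V : Type} (G : WDigraph V)
    (q : ℕ) (z : ℕ → V)
    (hedge : ∀ i, i < q → G.E (z i) (z (i + 1)))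
    (hshort : ∀ a b : ℕ, a ≤ b → b ≤ q →
      G.dist (z a) (z b) = ENNReal.ofReal (∑ i ∈ Finset.Ico a b, G.w (z i) (z (i + 1))))
    (x : V)
    (ρ : ℝ≥0∞) (hρ : ρ = ⨅ i ∈ Finset.Iic q, G.dist x (z i))
    (η : ℝ≥0∞)
    (hη : IsLeast {R : ℝ≥0∞ | ρ ≤ R ∧
      ∀ i, i ≤ q → G.dist x (z i) ≤ R →
        ∀ j, i ≤ j → j ≤ q → G.dist x (z j) ≤ R} η)
    (m : ℕ) (hm : m = sInf {i : ℕ | i ≤ q ∧ G.dist x (z i) ≤ η})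
    (I : Set ℕ)
    (hI : I = {i : ℕ | m ≤ i ∧ i ≤ q ∧
      ∀ j, m ≤ j → j < i → G.dist x (z i) < G.dist x (z j)})
    (l : ℕ) (hl : 1 ≤ l) (idx : ℕ → ℕ)
    (hdec : ∀ r, 1 ≤ r → r < l → idx (r + 1) < idx r)
    (hmem : ∀ r, 1 ≤ r → r ≤ l → idx r ∈ I)
    (hsurj : ∀ i ∈ I, ∃ r, 1 ≤ r ∧ r ≤ l ∧ idx r = i)
    (y : ℕ → V) (hy0 : y 0 = z q) (hy : ∀ r, 1 ≤ r → r ≤ l → y r = z (idx r)) :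
    (∀ r, 2 ≤ r → r ≤ l →
      G.dist x (y r) ≤
        ⨆ r' ∈ Finset.Icc 1 (r - 1), (G.dist x (y r') + G.dist (y r') (y (r' - 1)))) ∧
    η ≤ ⨆ r ∈ Finset.Icc 1 l, (G.dist x (y r) + G.dist (y r) (y (r - 1))) := by
  subst hI
  set f : ℕ → ℝ≥0∞ := fun i => G.dist x (z i)
  change ∀ r, 1 ≤ r → r ≤ l → idx r ∈ strictPrefixMinima f m q at hmem
  change ∀ i ∈ strictPrefixMinima f m q, _ at hsurj
  have hπ : G.IsShortestPath q z := ⟨hedge, hshort⟩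
  have hanti : AntitoneOn idx (Set.Icc 1 l) := antitoneOn_of_le_sub_one Set.ordConnected_Icc
    fun r _ ⟨hr1, hrl⟩ hr' => by
      simpa [Nat.sub_add_cancel hr1] using (hdec (r - 1) hr'.1 (by omega)).le
  obtain ⟨hmq, hfm⟩ := sInf_sublevel_spec hρ hη.1.1 hm
  have hρ_le k (hk : 1 ≤ k) : ρ ≤ G.hopBound x y k := calc
    ρ ≤ G.dist x (y 1) :=
      hρ ▸ hy 1 le_rfl hl ▸ iInf₂_le _ (Finset.mem_Iic.2 (hmem 1 le_rfl hl).2.1)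
    _ ≤ G.dist x (y 1) + G.dist (y 1) (y (1 - 1)) := le_self_add
    _ ≤ G.hopBound x y k := WDigraph.le_hopBound le_rfl hk
  have hC k (hk : 1 ≤ k) (hkl : k ≤ l) j (hkj : idx k ≤ j) (hjq : j ≤ q) :=
    hπ.dist_le_hopBound x hy0 hy (fun r h1 h2 => (hmem r h1 h2).2.1) hk hkl hkj hjq
  refine ⟨fun r hr hrl => ?_, ?_⟩
  · by_contra! hlt
    obtain ⟨hmr, hrq, -⟩ := hmem r (by omega) hrl
    rw [hy r (by omega) hrl] at hlt
    have hη_le : η ≤ G.hopBound x y (r - 1) := by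
      refine le_of_isLeast_sublevelUpClosed hη hm (hρ_le _ (by omega))
        fun i hmi hiq hfi j hij hjq => hC _ (by omega) (by omega) j (le_trans ?_ hij) hjq
      exact strictPrefixMinima_enum_pred_le_of_lt hanti hmem hsurj (by omega) hrl hmi hiq
        (hfi.trans_lt hlt)
    exact hlt.not_ge ((hη.1.2 m hmq hfm _ hmr hrq).trans hη_le)
  · refine le_of_isLeast_sublevelUpClosed hη hm (hρ_le l hl)
      fun i hmi _ _ j hij hjq => hC l hl le_rfl j ?_ hjq
    rw [strictPrefixMinima_enum_last_eq hanti hmem hsurj hmq]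
    exact hmi.trans hij

/-- with `ρ`, `η`, `m` as in the preceding lemma, let
`I = {i ∈ [m,q] : d_G(x,v_i) < d_G(x,v_j) for all m ≤ j < i}`, enumerated in decreasing
order as `i₁ > … > i_l`, and set `y_r = v_{i_r}`, `y₀ = v_q`.  Then
(i) for `2 ≤ r ≤ l`, `d_G(x,y_r) ≤ max_{1 ≤ r' ≤ r−1}(d_G(x,y_{r'}) + d_G(y_{r'},y_{r'−1}))`,
and (ii) `η ≤ max_{1 ≤ r ≤ l}(d_G(x,y_r) + d_G(y_r,y_{r−1}))`. -/
theorem eta_peak_bounds {V : Type} [Fintype V] (G : WDigraph V)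
    (q : ℕ) (z : ℕ → V)
    (hedge : ∀ i, i < q → G.E (z i) (z (i + 1)))
    (hshort : ∀ a b : ℕ, a ≤ b → b ≤ q →
      G.dist (z a) (z b) = ENNReal.ofReal (∑ i ∈ Finset.Ico a b, G.w (z i) (z (i + 1))))
    (x : V) (hreach : ∃ i, i ≤ q ∧ G.Reach x (z i))
    (ρ : ℝ≥0∞) (hρ : ρ = ⨅ i ∈ Finset.Iic q, G.dist x (z i))
    (η : ℝ≥0∞)
    (hη : IsLeast {R : ℝ≥0∞ | ρ ≤ R ∧
      ∀ i, i ≤ q → G.dist x (z i) ≤ R →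
        ∀ j, i ≤ j → j ≤ q → G.dist x (z j) ≤ R} η)
    (m : ℕ) (hm : m = sInf {i : ℕ | i ≤ q ∧ G.dist x (z i) ≤ η})
    (I : Set ℕ)
    (hI : I = {i : ℕ | m ≤ i ∧ i ≤ q ∧
      ∀ j, m ≤ j → j < i → G.dist x (z i) < G.dist x (z j)})
    (l : ℕ) (hl : 1 ≤ l) (idx : ℕ → ℕ)
    (hdec : ∀ r, 1 ≤ r → r < l → idx (r + 1) < idx r)
    (hmem : ∀ r, 1 ≤ r → r ≤ l → idx r ∈ I)
    (hsurj : ∀ i ∈ I, ∃ r, 1 ≤ r ∧ r ≤ l ∧ idx r = i)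
    (y : ℕ → V) (hy0 : y 0 = z q) (hy : ∀ r, 1 ≤ r → r ≤ l → y r = z (idx r)) :
    (∀ r, 2 ≤ r → r ≤ l →
      G.dist x (y r) ≤
        ⨆ r' ∈ Finset.Icc 1 (r - 1), (G.dist x (y r') + G.dist (y r') (y (r' - 1)))) ∧
    η ≤ ⨆ r ∈ Finset.Icc 1 l, (G.dist x (y r) + G.dist (y r) (y (r - 1))) :=
  eta_peak_bounds_general G q z hedge hshort x ρ hρ η hη m hm I hI l hl idx hdec hmem hsurj y hy0 hy
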